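/- Let q be an odd prime power of characteristic p, and let {x_k}_{k∈[n]} in 𝔽_{q²}^d be an (a,b,c₁)-equiangular tight frame with n = d², a ≠ 0, a² ≠ b, and a² − b = b c₁ / a. Then {x_k}_{k∈[n]} is an (a,c₁,c₂)-projective 2-design with c₂ = 2(a²−b). -/

import Mathlib

open Matrix Kronecker BigOperators

/-- The Hermitian form `⟨u, v⟩ = ∑ᵢ uᵢ^q vᵢ`, with conjugation the Frobenius `a ↦ a^q`. -/
def hermForm {F : Type*} [Field F] {ι : Type*} [Fintype ι] (q : ℕ) (u v : ι → F) : F :=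
  ∑ i, (u i) ^ q * v i

/-- The rank-one matrix `x x^*`, with conjugation `a ↦ a^q`. -/
def rankOne {F : Type*} [Field F] {d : ℕ} (q : ℕ) (x : Fin d → F) :
    Matrix (Fin d) (Fin d) F :=
  vecMulVec x (fun i => (x i) ^ q)

/-- The tensor square `x ⊗ x`. -/
def tensorSq {F : Type*} [Field F] {d : ℕ} (x : Fin d → F) : Fin d × Fin d → F :=
  fun p => x p.1 * x p.2

/-- The matrix `Π_d^{(2)} = ½ ∑ᵢⱼ (eᵢeᵢ^* ⊗ eⱼeⱼ^* + eᵢeⱼ^* ⊗ eⱼeᵢ^*)`. -/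
noncomputable def symProj (F : Type*) [Field F] (d : ℕ) :
    Matrix (Fin d × Fin d) (Fin d × Fin d) F :=
  (2 : F)⁻¹ • ∑ i : Fin d, ∑ j : Fin d,
    (single i i (1 : F) ⊗ₖ single j j (1 : F)
      + single i j (1 : F) ⊗ₖ single j i (1 : F))

/-- `{xₖ}` is an `(a, c₁, c₂)`-projective 2-design for `𝔽_{q²}^d`. -/
noncomputable def IsProj2Design {F : Type*} [Field F] (q d n : ℕ)
    (x : Fin n → Fin d → F) (a c₁ c₂ : F) : Prop :=
  a ^ q = a ∧ c₁ ^ q = c₁ ∧ c₂ ^ q = c₂ ∧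
  (∀ k, hermForm q (x k) (x k) = a) ∧
  (∑ k, rankOne q (x k)) = c₁ • (1 : Matrix (Fin d) (Fin d) F) ∧
  (∑ k, vecMulVec (tensorSq (x k)) (fun p => (tensorSq (x k) p) ^ q))
    = c₂ • symProj F d

/-!
Since `n = d²`, the rank-one matrices `xₖxₖ^*` span all `d × d` matrices: testing a vanishing
combination `∑ cₖ xₖxₖ^*` against `x_v` gives `b ∑ c + (a² − b) c_v = 0`, so the coefficients are
all equal, hence zero by tightness. Writing an arbitrary `E` as `∑ αₖ xₖxₖ^*`, the ETF conditions
give `⟨xₖ, E xₖ⟩ = b ∑ α + (a² − b) αₖ` and `tr E = a ∑ α`, so `b c₁ = (a² − b) a` yields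
`∑ₖ ⟨xₖ, E xₖ⟩ xₖxₖ^* = (a² − b) (tr E · 1 + E)`. For `E` a matrix unit this is one entry of
`∑ₖ (xₖ ⊗ xₖ)(xₖ ⊗ xₖ)^* = 2 (a² − b) Π`; the characteristic is odd, so `½` exists, and the
`q`-power Frobenius fixes `2 (a² − b)`.
-/

section HermForm
variable {F : Type*} [Field F] (q : ℕ) {d : ℕ}

lemma hermForm_eq_dotProduct {ι : Type*} [Fintype ι] (u v : ι → F) :
    hermForm q u v = (fun i => u i ^ q) ⬝ᵥ v := rfl

lemma hermForm_sum_smul_mulVec {ι : Type*} [Fintype ι] (c : ι → F)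
    (A : ι → Matrix (Fin d) (Fin d) F) (u v : Fin d → F) :
    hermForm q u ((∑ w, c w • A w) *ᵥ v) = ∑ w, c w * hermForm q u (A w *ᵥ v) := by
  simp only [hermForm_eq_dotProduct, sum_mulVec, smul_mulVec, dotProduct_sum, dotProduct_smul,
    smul_eq_mul]

lemma hermForm_rankOne_mulVec (u y v : Fin d → F) :
    hermForm q u (rankOne q y *ᵥ v) = hermForm q u y * hermForm q y v := by
  simp only [hermForm, rankOne, mulVec, dotProduct, vecMulVec_apply]
  rw [Finset.sum_mul_sum]
  simp only [Finset.mul_sum]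
  exact Finset.sum_congr rfl fun i _ => Finset.sum_congr rfl fun j _ => by ring

lemma hermForm_single_mulVec (i j : Fin d) (u v : Fin d → F) :
    hermForm q u (single i j 1 *ᵥ v) = u i ^ q * v j := by
  simp [hermForm, single_mulVec, Function.update_apply]

lemma trace_rankOne (x : Fin d → F) : (rankOne q x).trace = hermForm q x x := by
  simp only [rankOne, trace_vecMulVec, hermForm, dotProduct, mul_comm]

end HermForm

lemma symProj_apply (F : Type*) [Field F] (d : ℕ) (p p' : Fin d × Fin d) :
    symProj F d p p' = (2 : F)⁻¹ *
      ((if p.1 = p'.1 ∧ p.2 = p'.2 then 1 else 0) + if p.1 = p'.2 ∧ p.2 = p'.1 then 1 else 0) := by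
  simp only [symProj, Matrix.smul_apply, Matrix.sum_apply, Matrix.add_apply, kroneckerMap_apply,
    single, of_apply, smul_eq_mul, Finset.sum_add_distrib, ite_zero_mul_ite_zero, mul_one]
  congr 2
  · simp [ite_and]
  · simp [ite_and, eq_comm]
    split_ifs <;> rfl

structure IsETF {F : Type*} [Field F] {n d : ℕ} (q : ℕ) (x : Fin n → Fin d → F) (a b c₁ : F) :
    Prop where
  norm : ∀ k, hermForm q (x k) (x k) = a
  angle : ∀ k ℓ, k ≠ ℓ → hermForm q (x k) (x ℓ) * hermForm q (x ℓ) (x k) = b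
  tight : ∑ k, rankOne q (x k) = c₁ • (1 : Matrix (Fin d) (Fin d) F)

section EquiangularTightFrame
variable {F : Type*} [Field F] {q n d : ℕ} {x : Fin n → Fin d → F} {a b c₁ : F}

lemma hermForm_sum_smul_rankOne_mulVec_of_equiangular
    (hnorm : ∀ k, hermForm q (x k) (x k) = a)
    (hang : ∀ k ℓ, k ≠ ℓ → hermForm q (x k) (x ℓ) * hermForm q (x ℓ) (x k) = b)
    (c : Fin n → F) (v : Fin n) :
    hermForm q (x v) ((∑ k, c k • rankOne q (x k)) *ᵥ x v)
      = b * ∑ k, c k + (a ^ 2 - b) * c v := by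
  have hterm : ∀ k, c k * hermForm q (x v) (rankOne q (x k) *ᵥ x v)
      = b * c k + if k = v then (a ^ 2 - b) * c k else 0 := by
    intro k
    rw [hermForm_rankOne_mulVec]
    split_ifs with hk
    · rw [hk, hnorm]; ring
    · rw [hang v k (Ne.symm hk)]; ring
  rw [hermForm_sum_smul_mulVec, Finset.sum_congr rfl fun k _ => hterm k, Finset.sum_add_distrib,
    Finset.mul_sum, Finset.sum_ite_eq' Finset.univ v, if_pos (Finset.mem_univ v)]

namespace IsETF

lemma linearIndependent_rankOne [NeZero d] (hx : IsETF q x a b c₁) (hΔ : a ^ 2 - b ≠ 0)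
    (hc₁ : c₁ ≠ 0) : LinearIndependent F fun k => rankOne q (x k) := by
  rw [Fintype.linearIndependent_iff]
  intro c hc v
  have hdiag : ∀ w, b * ∑ k, c k + (a ^ 2 - b) * c w = 0 := fun w => by
    rw [← hermForm_sum_smul_rankOne_mulVec_of_equiangular hx.norm hx.angle, hc, zero_mulVec]
    simp [hermForm]
  have hconst : ∀ w, c w = c v := fun w =>
    mul_left_cancel₀ hΔ (add_left_cancel ((hdiag w).trans (hdiag v).symm))
  have hsum : c v • c₁ • (1 : Matrix (Fin d) (Fin d) F) = 0 := by
    rw [← hx.tight, Finset.smul_sum, ← hc]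
    exact Finset.sum_congr rfl fun w _ => by rw [hconst w]
  simpa [hc₁] using hsum

lemma span_rankOne_eq_top (hx : IsETF q x a b c₁) (hn : n = d ^ 2) (hΔ : a ^ 2 - b ≠ 0)
    (hc₁ : c₁ ≠ 0) : Submodule.span F (Set.range fun k => rankOne q (x k)) = ⊤ := by
  obtain rfl | hd := eq_zero_or_neZero d
  · exact Subsingleton.elim _ _
  · exact (hx.linearIndependent_rankOne hΔ hc₁).span_eq_top_of_card_eq_finrank'
      (by simp [hn, Module.finrank_matrix, sq])

lemma sum_hermForm_mulVec_smul_rankOne (hx : IsETF q x a b c₁) (hn : n = d ^ 2)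
    (hΔ : a ^ 2 - b ≠ 0) (hc₁ : c₁ ≠ 0) (hrel : (a ^ 2 - b) * a = b * c₁)
    (E : Matrix (Fin d) (Fin d) F) :
    ∑ k, hermForm q (x k) (E *ᵥ x k) • rankOne q (x k) = (a ^ 2 - b) • (E.trace • 1 + E) := by
  have hE : E ∈ Submodule.span F (Set.range fun k => rankOne q (x k)) := by
    rw [hx.span_rankOne_eq_top hn hΔ hc₁]; exact Submodule.mem_top
  obtain ⟨α, rfl⟩ := (Submodule.mem_span_range_iff_exists_fun F).mp hE
  have htrace : (∑ k, α k • rankOne q (x k)).trace = a * ∑ k, α k := by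
    simp [trace_sum, trace_smul, trace_rankOne, hx.norm, Finset.mul_sum, mul_comm]
  simp only [hermForm_sum_smul_rankOne_mulVec_of_equiangular hx.norm hx.angle, htrace, add_smul,
    Finset.sum_add_distrib, mul_smul, ← Finset.smul_sum, hx.tight, smul_add]
  simp only [smul_smul]
  congr 2
  linear_combination (∑ k, α k) * hrel.symm

lemma sum_fourth_moment (hx : IsETF q x a b c₁) (hn : n = d ^ 2) (hΔ : a ^ 2 - b ≠ 0)
    (hc₁ : c₁ ≠ 0) (hrel : (a ^ 2 - b) * a = b * c₁) (i j k l : Fin d) :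
    ∑ w, x w i * x w j * (x w k * x w l) ^ q = (a ^ 2 - b) *
      ((if i = k ∧ j = l then 1 else 0) + if i = l ∧ j = k then 1 else 0) := by
  have h := congrFun (congrFun
    (hx.sum_hermForm_mulVec_smul_rankOne hn hΔ hc₁ hrel (single k j 1)) i) l
  simp only [hermForm_single_mulVec, Matrix.sum_apply, Matrix.smul_apply, rankOne, vecMulVec_apply,
    Matrix.add_apply, one_apply, smul_eq_mul] at h
  have htrace : (single k j (1 : F)).trace = if j = k then 1 else 0 := by
    split_ifs with hjk
    · rw [hjk, trace_single_eq_same]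
    · exact trace_single_eq_of_ne _ _ _ (Ne.symm hjk)
  have hentry : single k j (1 : F) i l = if i = k ∧ j = l then 1 else 0 := by
    simp [single, eq_comm]
  calc ∑ w, x w i * x w j * (x w k * x w l) ^ q
      = ∑ w, x w k ^ q * x w j * (x w i * x w l ^ q) :=
        Finset.sum_congr rfl fun w _ => by ring
    _ = _ := by
      rw [h, htrace, hentry, mul_comm (ite (j = k) _ _), ite_zero_mul_ite_zero, one_mul,
        add_comm]

lemma sum_tensorSq_eq_smul_symProj (hx : IsETF q x a b c₁) (hn : n = d ^ 2)
    (hΔ : a ^ 2 - b ≠ 0) (hc₁ : c₁ ≠ 0) (hrel : (a ^ 2 - b) * a = b * c₁) (h2 : (2 : F) ≠ 0) :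
    ∑ k, vecMulVec (tensorSq (x k)) (fun p => tensorSq (x k) p ^ q)
      = (2 * (a ^ 2 - b)) • symProj F d := by
  ext p p'
  simp only [Matrix.sum_apply, vecMulVec_apply, tensorSq, Matrix.smul_apply, symProj_apply,
    smul_eq_mul, hx.sum_fourth_moment hn hΔ hc₁ hrel]
  field_simp

end IsETF

end EquiangularTightFrame

/-- Part of Theorem 3.10 ((b)∧(c)⇒(a), Case I): an `(a,b,c₁)`-ETF of `n = d²`
vectors in `𝔽_{q²}^d` with `a ≠ 0`, `a² ≠ b`, and `a² − b = b c₁ / a` is an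
`(a, c₁, 2(a²−b))`-projective 2-design. -/
theorem etf_gerzon_equality_is_design
    (q p k d n : ℕ) (hp : p.Prime) (hq : q = p ^ k) (hodd : Odd q)
    (F : Type*) [Field F] [Fintype F] (hcard : Fintype.card F = q ^ 2)
    (x : Fin n → Fin d → F) (a b c₁ : F)
    (ha' : a ^ q = a) (hb' : b ^ q = b) (hc₁' : c₁ ^ q = c₁)
    (hnorm : ∀ k, hermForm q (x k) (x k) = a)
    (hang : ∀ k ℓ, k ≠ ℓ → hermForm q (x k) (x ℓ) * hermForm q (x ℓ) (x k) = b)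
    (htight : (∑ k, rankOne q (x k)) = c₁ • (1 : Matrix (Fin d) (Fin d) F))
    (hn : n = d ^ 2) (ha : a ≠ 0) (hab : a ^ 2 ≠ b)
    (hrel : a ^ 2 - b = b * c₁ / a) :
    IsProj2Design q d n x a c₁ (2 * (a ^ 2 - b)) := by
  have hΔ : a ^ 2 - b ≠ 0 := sub_ne_zero.mpr hab
  have hrel' : (a ^ 2 - b) * a = b * c₁ := by rw [hrel, div_mul_cancel₀ _ ha]
  have hc₁ : c₁ ≠ 0 := by
    rintro rfl
    exact hΔ (by simpa [ha] using hrel')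
  have h2 : (2 : F) ≠ 0 := Ring.two_ne_zero fun hchar => by
    have heven := FiniteField.even_card_iff_char_two.mp hchar
    rw [hcard, ← Nat.even_iff] at heven
    exact Nat.not_even_iff_odd.mpr hodd.pow heven
  have : Fact p.Prime := ⟨hp⟩
  have : CharP F p :=
    charP_of_card_eq_prime_pow (f := 2 * k) (by rw [hcard, hq, ← pow_mul, mul_comm])
  have hfrob : ∀ y : F, iterateFrobenius F p k y = y ^ q := fun y => by
    rw [iterateFrobenius_def, hq]
  have hc₂ : (2 * (a ^ 2 - b)) ^ q = 2 * (a ^ 2 - b) := by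
    rw [← hfrob, map_mul, map_sub, map_pow, map_ofNat, hfrob, hfrob, ha', hb']
  exact ⟨ha', hc₁', hc₂, hnorm, htight, IsETF.sum_tensorSq_eq_smul_symProj ⟨hnorm, hang, htight⟩
    hn hΔ hc₁ hrel' h2⟩
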